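/- arXiv:0809.1552 — 2 statements merged into one kernel-verified Lean document; each statement's English description precedes it below -/
import Mathlib

section
/- (Split–Split, mixed) For every type X, every step function f : S X and rationals a, b, c, d strictly between 0 and 1, if a + b − a·b = c and d·c = a then splitL (splitR f a) b ≍ splitR (splitL f c) d, where ≍ is the lifted equality relation on S X. -/
set_option linter.unusedVariables false

/-- Rationals strictly between 0 and 1. -/
abbrev OO : Type := {q : ℚ // 0 < q ∧ q < 1}

/-- Rational step functions on the unit interval with values in `X`. -/
inductive S (X : Type) : Type
  | const : X → S X
  | glue : OO → S X → S X → S X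

namespace S

def divO (a o : OO) (h : a.1 < o.1) : OO :=
  ⟨a.1 / o.1, div_pos a.2.1 o.2.1, (div_lt_one o.2.1).2 h⟩

def subO (a o : OO) (h : o.1 < a.1) : OO :=
  ⟨(a.1 - o.1) / (1 - o.1),
    div_pos (by linarith) (by linarith [o.2.2]),
    (div_lt_one (by linarith [o.2.2])).2 (by linarith [a.2.2])⟩

/-- Left split: the part of the step function on `[0,a]`, rescaled to `[0,1]`. -/
def splitL {X : Type} : S X → OO → S X
  | const x, _ => const x
  | glue o f g, a =>
      if h : a.1 < o.1 then splitL f (divO a o h)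
      else if h' : o.1 < a.1 then glue (divO o a h') f (splitL g (subO a o h'))
      else f

/-- Right split: the part of the step function on `[a,1]`, rescaled to `[0,1]`. -/
def splitR {X : Type} : S X → OO → S X
  | const x, _ => const x
  | glue o f g, a =>
      if h : a.1 < o.1 then glue (subO o a h) (splitR f (divO a o h)) g
      else if h' : o.1 < a.1 then splitR g (subO a o h')
      else g

/-- The catamorphism (fold) for step functions. -/
def fold {X Y : Type} (φ : X → Y) (ψ : OO → Y → Y → Y) : S X → Y
  | const x => φ x
  | glue o f g => ψ o (fold φ ψ f) (fold φ ψ g)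

/-- `map` for step functions. -/
def mapS {X Y : Type} (f : X → Y) : S X → S Y
  | const x => const (f x)
  | glue o l r => glue o (mapS f l) (mapS f r)

/-- The applicative `ap` (pointwise application) for step functions. -/
def ap {X Y : Type} : S (X → Y) → S X → S Y
  | const f, x => mapS f x
  | glue o fl fr, x => glue o (ap fl (splitL x o)) (ap fr (splitR x o))

/-- Binary map. -/
def map2 {X Y Z : Type} (f : X → Y → Z) (a : S X) (b : S Y) : S Z :=
  ap (mapS f a) b

/-- `fold⋆`: a step function of propositions holds everywhere. -/
def foldStar : S Prop → Prop := fold id (fun _ p q => p ∧ q)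

/-- Lifting of a relation to step functions: it holds pointwise everywhere. -/
def liftRel {X Y : Type} (R : X → Y → Prop) (f : S X) (g : S Y) : Prop :=
  foldStar (map2 R f g)

/-- The equivalence `≍` on step functions: the lifting of equality. -/
def equivS {X : Type} (f g : S X) : Prop := liftRel Eq f g

def foldSup : S ℚ → ℚ := fold id (fun _ x y => max x y)

def foldAffine : S ℚ → ℚ := fold id (fun o x y => o.1 * x + (1 - o.1) * y)

def normInf (f : S ℚ) : ℚ := foldSup (mapS (fun q => |q|) f)

def normOne (f : S ℚ) : ℚ := foldAffine (mapS (fun q => |q|) f)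

def dInf (f g : S ℚ) : ℚ := normInf (map2 (· - ·) f g)

def dOne (f g : S ℚ) : ℚ := normOne (map2 (· - ·) f g)

end S

/-! `splitR · a` followed by `splitL · b` and `splitL · c` followed by `splitR · d` both cut out the
piece of `f` over `[a, c]` and rescale it to `[0, 1]`: the hypotheses say exactly that
`b = (c - a) / (1 - a)` and `d = a / c`. So the two sides are in fact equal, which is shown by
induction on `f`, distinguishing where the breakpoint `o` of a `glue` lies relative to `[a, c]`. -/

namespace S

variable {X : Type}

@[simp]
lemma coe_divO (a o : OO) (h : a.1 < o.1) : (divO a o h).1 = a.1 / o.1 := rfl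

@[simp]
lemma coe_subO (a o : OO) (h : o.1 < a.1) : (subO a o h).1 = (a.1 - o.1) / (1 - o.1) := rfl

section Unfold

variable {o a : OO} {l r : S X}

lemma splitL_glue_of_lt (h : a.1 < o.1) : splitL (glue o l r) a = splitL l (divO a o h) := by
  simp [splitL, h]

lemma splitL_glue_self : splitL (glue o l r) o = l := by
  simp [splitL]

lemma splitL_glue_of_gt (h : o.1 < a.1) :
    splitL (glue o l r) a = glue (divO o a h) l (splitL r (subO a o h)) := by
  simp [splitL, h, h.not_gt]

lemma splitR_glue_of_lt (h : a.1 < o.1) :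
    splitR (glue o l r) a = glue (subO o a h) (splitR l (divO a o h)) r := by
  simp [splitR, h]

lemma splitR_glue_self : splitR (glue o l r) o = r := by
  simp [splitR]

lemma splitR_glue_of_gt (h : o.1 < a.1) : splitR (glue o l r) a = splitR r (subO a o h) := by
  simp [splitR, h, h.not_gt]

end Unfold

lemma subO_lt_subO {a x y : OO} (hx : a.1 < x.1) (hy : a.1 < y.1) (hxy : x.1 < y.1) :
    (subO x a hx).1 < (subO y a hy).1 :=
  div_lt_div_of_pos_right (sub_lt_sub_right hxy _) (sub_pos.2 a.2.2)

lemma divO_lt_divO {a x y : OO} (hx : x.1 < a.1) (hy : y.1 < a.1) (hxy : x.1 < y.1) :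
    (divO x a hx).1 < (divO y a hy).1 :=
  div_lt_div_of_pos_right hxy a.2.1

/- `divO x y` and `subO y x` are the coordinates of `x` in `[0, y]` and of `y` in `[x, 1]`; these
laws say that taking coordinates relative to nested intervals composes. -/
section Rescale

variable {a x y : OO} (hax : a.1 < x.1) (hxy : x.1 < y.1)

lemma divO_subO_subO :
    divO (subO x a hax) (subO y a (hax.trans hxy)) (subO_lt_subO hax (hax.trans hxy) hxy) =
      subO (divO x y hxy) (divO a y (hax.trans hxy)) (divO_lt_divO (hax.trans hxy) hxy hax) := by
  have : y.1 - a.1 ≠ 0 := sub_ne_zero.2 (hax.trans hxy).ne'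
  have : 1 - a.1 ≠ 0 := sub_ne_zero.2 a.2.2.ne'
  have : y.1 ≠ 0 := y.2.1.ne'
  ext
  simp only [coe_divO, coe_subO]
  field_simp

lemma divO_divO_divO :
    divO (divO a y (hax.trans hxy)) (divO x y hxy) (divO_lt_divO (hax.trans hxy) hxy hax) =
      divO a x hax := by
  have : y.1 ≠ 0 := y.2.1.ne'
  ext
  simp only [coe_divO]
  field_simp

lemma subO_subO_subO :
    subO (subO y a (hax.trans hxy)) (subO x a hax) (subO_lt_subO hax (hax.trans hxy) hxy) =
      subO y x hxy := by
  have h : 1 - a.1 ≠ 0 := sub_ne_zero.2 a.2.2.ne'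
  ext
  simp only [coe_subO]
  rw [div_sub_div_same, one_sub_div h, div_div_div_cancel_right₀ h]
  congr 1 <;> ring

end Rescale

lemma liftRel_refl {R : X → X → Prop} (hR : ∀ x, R x x) (f : S X) : liftRel R f f := by
  induction f with
  | const x => exact hR x
  | glue o l r ihl ihr =>
    show foldStar (ap (glue o (mapS R l) (mapS R r)) (glue o l r))
    rw [ap, splitL_glue_self, splitR_glue_self]
    exact ⟨ihl, ihr⟩

theorem splitL_splitR (f : S X) (a c : OO) (hac : a.1 < c.1) :
    splitL (splitR f a) (subO c a hac) = splitR (splitL f c) (divO a c hac) := by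
  induction f generalizing a c with
  | const x => rfl
  | glue o u v ihu ihv =>
    rcases lt_or_ge a o with hao | hoa
    · rcases lt_trichotomy c o with hco | rfl | hoc
      · rw [splitR_glue_of_lt hao, splitL_glue_of_lt (subO_lt_subO hac hao hco),
          splitL_glue_of_lt hco, divO_subO_subO hac hco, ← divO_divO_divO hac hco]
        exact ihu _ _ _
      · rw [splitR_glue_of_lt hao, splitL_glue_self, splitL_glue_self]
      · rw [splitR_glue_of_lt hao, splitL_glue_of_gt (subO_lt_subO hao hac hoc),
          splitL_glue_of_gt hoc, splitR_glue_of_lt (divO_lt_divO hac hoc hao),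
          divO_subO_subO hao hoc, divO_divO_divO hao hoc, subO_subO_subO hao hoc]
    · rcases hoa.eq_or_lt with rfl | hoa
      · rw [splitR_glue_self, splitL_glue_of_gt hac, splitR_glue_self]
      · have hoc := hoa.trans hac
        rw [splitR_glue_of_gt hoa, splitL_glue_of_gt hoc,
          splitR_glue_of_gt (divO_lt_divO hoc hac hoa),
          ← subO_subO_subO hoa hac, ← divO_subO_subO hoa hac]
        exact ihv _ _ _

end S

open S

/-- Split–Split, mixed: if `a + b − a·b = c` and `d·c = a` then
`splitL (splitR f a) b ≍ splitR (splitL f c) d`. -/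
theorem splitL_splitR_equiv {X : Type} (f : S X) (a b c d : OO)
    (h1 : a.1 + b.1 - a.1 * b.1 = c.1) (h2 : d.1 * c.1 = a.1) :
    equivS (splitL (splitR f a) b) (splitR (splitL f c) d) := by
  have hac : a.1 < c.1 := by nlinarith [a.2.2, b.2.1]
  have hb : b = subO c a hac := Subtype.ext <| by
    rw [coe_subO, eq_div_iff (by linarith [a.2.2])]
    linear_combination h1
  have hd : d = divO a c hac := Subtype.ext <| by
    rw [coe_divO, eq_div_iff (by linarith [a.2.1])]
    exact h2
  subst hb hd
  rw [splitL_splitR]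
  exact liftRel_refl (fun _ => rfl) _
end

section
/- For every type X equipped with an equivalence relation ≈ (a Setoid structure on X), the lifted relation on rational step functions defined by f ≍ g := f {≈} g is an equivalence relation on S X; in particular it is reflexive, symmetric and transitive. -/
set_option linter.unusedVariables false

open S

/-!
Evaluate a step function at the points of `(0, 1]`, a breakpoint belonging to the piece on its
left. Splitting at `a` is precomposition with `t ↦ a t` (left part) and `t ↦ a + (1 - a) t`
(right part), so by induction `f {R} g` holds exactly when `R (f t) (g t)` holds for every
`t ∈ (0, 1]`. Reflexivity, symmetry and transitivity of `≈` then transfer pointwise.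
-/

open Set

namespace S

variable {X Y : Type}

def eval : S X → ℚ → X
  | const x, _ => x
  | glue o f g, t => if t ≤ o.1 then eval f (t / o.1) else eval g ((t - o.1) / (1 - o.1))

section Reparametrization

variable (c : OO) {t : ℚ}

lemma mul_mem_Ioc (ht : t ∈ Ioc 0 1) : c.1 * t ∈ Ioc (0 : ℚ) 1 := by
  obtain ⟨hc₀, hc₁⟩ := c.2
  exact ⟨mul_pos hc₀ ht.1, by nlinarith [ht.2]⟩

lemma affine_mem_Ioc (ht : t ∈ Ioc 0 1) : c.1 + (1 - c.1) * t ∈ Ioc (0 : ℚ) 1 := by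
  obtain ⟨hc₀, hc₁⟩ := c.2
  exact ⟨by nlinarith [ht.1], by nlinarith [ht.2]⟩

lemma exists_eq_mul_or_eq_affine (ht : t ∈ Ioc 0 1) :
    ∃ s ∈ Ioc (0 : ℚ) 1, t = c.1 * s ∨ t = c.1 + (1 - c.1) * s := by
  obtain ⟨hc₀, hc₁⟩ := c.2
  have hc₁' : (0 : ℚ) < 1 - c.1 := by linarith
  rcases le_or_gt t c.1 with htc | htc
  · refine ⟨t / c.1, ⟨div_pos ht.1 hc₀, (div_le_one hc₀).2 htc⟩, Or.inl ?_⟩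
    field_simp
  · refine ⟨(t - c.1) / (1 - c.1),
      ⟨div_pos (by linarith) hc₁', (div_le_one hc₁').2 (by linarith [ht.2])⟩, Or.inr ?_⟩
    field_simp
    ring

lemma forall_Ioc_iff_split (Q : ℚ → Prop) :
    (∀ t ∈ Ioc (0 : ℚ) 1, Q t) ↔
      (∀ t ∈ Ioc (0 : ℚ) 1, Q (c.1 * t)) ∧ (∀ t ∈ Ioc (0 : ℚ) 1, Q (c.1 + (1 - c.1) * t)) := by
  refine ⟨fun h => ⟨fun t ht => h _ (mul_mem_Ioc c ht), fun t ht => h _ (affine_mem_Ioc c ht)⟩,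
    fun ⟨hl, hr⟩ t ht => ?_⟩
  obtain ⟨s, hs, rfl | rfl⟩ := exists_eq_mul_or_eq_affine c ht
  exacts [hl s hs, hr s hs]

end Reparametrization

lemma eval_glue_mul (o : OO) (f g : S X) {t : ℚ} (ht : t ∈ Ioc 0 1) :
    eval (glue o f g) (o.1 * t) = eval f t := by
  have ho := o.2.1
  rw [eval, if_pos (by nlinarith [ht.2]), mul_div_cancel_left₀ t ho.ne']

lemma eval_glue_affine (o : OO) (f g : S X) {t : ℚ} (ht : t ∈ Ioc 0 1) :
    eval (glue o f g) (o.1 + (1 - o.1) * t) = eval g t := by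
  have ho : (0 : ℚ) < 1 - o.1 := by linarith [o.2.2]
  rw [eval, if_neg (by nlinarith [ht.1]), add_sub_cancel_left, mul_div_cancel_left₀ t ho.ne']

lemma eval_splitL : ∀ (f : S X) (a : OO) {t : ℚ}, t ∈ Ioc 0 1 →
    eval (splitL f a) t = eval f (a.1 * t)
  | const _, _, _, _ => rfl
  | glue o fl fr, a, t, ht => by
    have ho₀ : o.1 ≠ 0 := o.2.1.ne'
    have ha₀ : a.1 ≠ 0 := a.2.1.ne'
    have ho₁ : 1 - o.1 ≠ 0 := sub_ne_zero.2 o.2.2.ne'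
    rcases lt_trichotomy a.1 o.1 with h | h | h
    · rw [splitL, dif_pos h, eval_splitL fl _ ht,
        show a.1 * t = o.1 * ((divO a o h).1 * t) by simp only [divO]; field_simp,
        eval_glue_mul o fl fr (mul_mem_Ioc _ ht)]
    · rw [splitL, dif_neg h.not_lt, dif_neg h.symm.not_lt, h, eval_glue_mul o fl fr ht]
    · rw [splitL, dif_neg (lt_asymm h), dif_pos h]
      obtain ⟨s, hs, rfl | rfl⟩ := exists_eq_mul_or_eq_affine (divO o a h) ht
      · rw [eval_glue_mul _ _ _ hs,
          show a.1 * ((divO o a h).1 * s) = o.1 * s by simp only [divO]; field_simp,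
          eval_glue_mul o fl fr hs]
      · rw [eval_glue_affine _ _ _ hs, eval_splitL fr _ hs,
          show a.1 * ((divO o a h).1 + (1 - (divO o a h).1) * s)
              = o.1 + (1 - o.1) * ((subO a o h).1 * s) by
            simp only [divO, subO]; field_simp,
          eval_glue_affine o fl fr (mul_mem_Ioc _ hs)]

lemma eval_splitR : ∀ (f : S X) (a : OO) {t : ℚ}, t ∈ Ioc 0 1 →
    eval (splitR f a) t = eval f (a.1 + (1 - a.1) * t)
  | const _, _, _, _ => rfl
  | glue o fl fr, a, t, ht => by
    have ho₀ : o.1 ≠ 0 := o.2.1.ne'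
    have ho₁ : 1 - o.1 ≠ 0 := sub_ne_zero.2 o.2.2.ne'
    have ha₁ : 1 - a.1 ≠ 0 := sub_ne_zero.2 a.2.2.ne'
    rcases lt_trichotomy a.1 o.1 with h | h | h
    · rw [splitR, dif_pos h]
      obtain ⟨s, hs, rfl | rfl⟩ := exists_eq_mul_or_eq_affine (subO o a h) ht
      · rw [eval_glue_mul _ _ _ hs, eval_splitR fl _ hs,
          show a.1 + (1 - a.1) * ((subO o a h).1 * s)
              = o.1 * ((divO a o h).1 + (1 - (divO a o h).1) * s) by
            simp only [divO, subO]; field_simp,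
          eval_glue_mul o fl fr (affine_mem_Ioc _ hs)]
      · rw [eval_glue_affine _ _ _ hs,
          show a.1 + (1 - a.1) * ((subO o a h).1 + (1 - (subO o a h).1) * s)
              = o.1 + (1 - o.1) * s by
            simp only [subO]; field_simp; ring,
          eval_glue_affine o fl fr hs]
    · rw [splitR, dif_neg h.not_lt, dif_neg h.symm.not_lt, h, eval_glue_affine o fl fr ht]
    · rw [splitR, dif_neg (lt_asymm h), dif_pos h, eval_splitR fr _ ht,
        show a.1 + (1 - a.1) * t
            = o.1 + (1 - o.1) * ((subO a o h).1 + (1 - (subO a o h).1) * t) by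
          simp only [subO]; field_simp; ring,
        eval_glue_affine o fl fr (affine_mem_Ioc _ ht)]

lemma liftRel_const_glue (R : X → Y → Prop) (x : X) (o : OO) (gl gr : S Y) :
    liftRel R (const x) (glue o gl gr) ↔ liftRel R (const x) gl ∧ liftRel R (const x) gr :=
  Iff.rfl

lemma liftRel_glue_left (R : X → Y → Prop) (o : OO) (fl fr : S X) (g : S Y) :
    liftRel R (glue o fl fr) g ↔ liftRel R fl (splitL g o) ∧ liftRel R fr (splitR g o) :=
  Iff.rfl

lemma liftRel_const_iff_forall_eval (R : X → Y → Prop) (x : X) :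
    ∀ g : S Y, liftRel R (const x) g ↔ ∀ t ∈ Ioc (0 : ℚ) 1, R x (eval g t)
  | const _ => ⟨fun h _ _ => h, fun h => h 1 ⟨one_pos, le_rfl⟩⟩
  | glue o gl gr => by
    rw [liftRel_const_glue, liftRel_const_iff_forall_eval R x gl,
      liftRel_const_iff_forall_eval R x gr]
    refine Iff.trans ?_ (forall_Ioc_iff_split o _).symm
    refine and_congr (forall₂_congr fun t ht => ?_) (forall₂_congr fun t ht => ?_)
    · rw [eval_glue_mul o gl gr ht]
    · rw [eval_glue_affine o gl gr ht]

lemma liftRel_iff_forall_eval (R : X → Y → Prop) :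
    ∀ (f : S X) (g : S Y), liftRel R f g ↔ ∀ t ∈ Ioc (0 : ℚ) 1, R (eval f t) (eval g t)
  | const x, g => liftRel_const_iff_forall_eval R x g
  | glue o fl fr, g => by
    rw [liftRel_glue_left, liftRel_iff_forall_eval R fl, liftRel_iff_forall_eval R fr]
    refine Iff.trans ?_ (forall_Ioc_iff_split o _).symm
    refine and_congr (forall₂_congr fun t ht => ?_) (forall₂_congr fun t ht => ?_)
    · rw [eval_glue_mul o fl fr ht, eval_splitL g o ht]
    · rw [eval_glue_affine o fl fr ht, eval_splitR g o ht]

end S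

/-- Lifting an equivalence relation (a setoid structure) on `X` to step functions
yields an equivalence relation on `S X`. -/
theorem liftRel_equivalence {X : Type} (r : X → X → Prop) (hr : Equivalence r) :
    Equivalence (fun f g : S X => liftRel r f g) := by
  simp only [liftRel_iff_forall_eval]
  exact ⟨fun _ _ _ => hr.refl _, fun h t ht => hr.symm (h t ht),
    fun h₁ h₂ t ht => hr.trans (h₁ t ht) (h₂ t ht)⟩
end
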